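/- arXiv:1608.04299 — 2 statements merged into one kernel-verified Lean document; each statement's English description precedes it below -/
import Mathlib

section
/- For every 0 ≤ ε < 1, the Ptolemy constant of the ellipse satisfies the lower bound P(ε) ≥ (1/2)·(1/√(1 − ε²) + √(1 − ε²)) = (2 − ε²)/(2√(1 − ε²)). -/
open Real

/-- The point `(cos θ, √(1 - ε²) · sin θ)` on the ellipse `x² + y²/(1-ε²) = 1`. -/
noncomputable def ellipsePoint (ε θ : ℝ) : EuclideanSpace ℝ (Fin 2) :=
  WithLp.toLp 2 ![Real.cos θ, Real.sqrt (1 - ε ^ 2) * Real.sin θ]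

/-- The Ptolemy ratio of four points in the Euclidean plane. -/
noncomputable def ptolemyRatio (v₁ v₂ v₃ v₄ : EuclideanSpace ℝ (Fin 2)) : ℝ :=
  (‖v₁ - v₂‖ * ‖v₃ - v₄‖ + ‖v₁ - v₄‖ * ‖v₂ - v₃‖) / (‖v₁ - v₃‖ * ‖v₂ - v₄‖)

/-- The Ptolemy constant of the ellipse of eccentricity `ε`: the supremum of the
Ptolemy ratio over all `0 ≤ θ₁ < θ₂ < θ₃ < θ₄ < 2π`. -/
noncomputable def ellipsePtolemyConst (ε : ℝ) : ℝ :=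
  sSup {r : ℝ | ∃ θ₁ θ₂ θ₃ θ₄ : ℝ, 0 ≤ θ₁ ∧ θ₁ < θ₂ ∧ θ₂ < θ₃ ∧ θ₃ < θ₄ ∧ θ₄ < 2 * π ∧
    r = ptolemyRatio (ellipsePoint ε θ₁) (ellipsePoint ε θ₂) (ellipsePoint ε θ₃)
        (ellipsePoint ε θ₄)}

/-!
The vertices `(±1, 0)`, `(0, ±b)` of the ellipse, `b = √(1 - ε²)`, have Ptolemy ratio
`(2 - ε²) / (2b)`. Since `sSup` of a set unbounded above is `0`, the ratios must also be bounded: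
the map `(x, y) ↦ (x, b y)` carries the unit circle onto the ellipse and scales distances by a
factor in `[b, 1]`, while the chords `2 sin ((φ - θ) / 2)` of a cyclically ordered quadruple on
the circle satisfy Ptolemy's equality; hence every ratio on the ellipse is at most `1 / b²`.
-/

lemma sin_ptolemy (a b c : ℝ) :
    sin a * sin c + sin (a + b + c) * sin b = sin (a + b) * sin (b + c) := by
  simp only [sin_add, cos_add]
  linear_combination (-(sin a * sin c)) * sin_sq_add_cos_sq b

lemma cos_sub_cos_sq_add_sin_sub_sin_sq (θ φ : ℝ) :
    (cos θ - cos φ) ^ 2 + (sin θ - sin φ) ^ 2 = (2 * |sin ((φ - θ) / 2)|) ^ 2 := by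
  rw [mul_pow, sq_abs, cos_sub_cos, sin_sub_sin, ← neg_sub φ θ, neg_div, sin_neg]
  linear_combination 4 * sin ((φ - θ) / 2) ^ 2 * sin_sq_add_cos_sq ((θ + φ) / 2)

lemma norm_ellipsePoint_sub_sq {ε : ℝ} (hε : ε ^ 2 ≤ 1) (θ φ : ℝ) :
    ‖ellipsePoint ε θ - ellipsePoint ε φ‖ ^ 2 =
      (cos θ - cos φ) ^ 2 + (1 - ε ^ 2) * (sin θ - sin φ) ^ 2 := by
  rw [ellipsePoint, ellipsePoint, EuclideanSpace.norm_eq, sq_sqrt (by positivity)]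
  simp only [PiLp.sub_apply, norm_eq_abs, sq_abs, Fin.sum_univ_two, Matrix.cons_val_zero,
    Matrix.cons_val_one, Matrix.cons_val_fin_one, add_right_inj]
  linear_combination (sin θ - sin φ) ^ 2 * sq_sqrt (sub_nonneg.2 hε)

lemma norm_ellipsePoint_sub_le {ε : ℝ} (hε : ε ^ 2 ≤ 1) (θ φ : ℝ) :
    ‖ellipsePoint ε θ - ellipsePoint ε φ‖ ≤ 2 * |sin ((φ - θ) / 2)| := by
  rw [← sq_le_sq₀ (norm_nonneg _) (by positivity), norm_ellipsePoint_sub_sq hε,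
    ← cos_sub_cos_sq_add_sin_sub_sin_sq]
  nlinarith [sq_nonneg ε, sq_nonneg (sin θ - sin φ)]

lemma sqrt_mul_le_norm_ellipsePoint_sub {ε : ℝ} (hε : ε ^ 2 ≤ 1) (θ φ : ℝ) :
    √(1 - ε ^ 2) * (2 * |sin ((φ - θ) / 2)|) ≤ ‖ellipsePoint ε θ - ellipsePoint ε φ‖ := by
  rw [← sq_le_sq₀ (by positivity) (norm_nonneg _), norm_ellipsePoint_sub_sq hε, mul_pow,
    sq_sqrt (sub_nonneg.2 hε), ← cos_sub_cos_sq_add_sin_sub_sin_sq]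
  nlinarith [sq_nonneg ε, sq_nonneg (cos θ - cos φ)]

lemma ptolemy_ratio_le_of_chord_bounds {x₁₂ x₂₃ x₃₄ x₁₄ x₁₃ x₂₄ c₁₂ c₂₃ c₃₄ c₁₄ c₁₃ c₂₄ q : ℝ}
    (hq : 0 < q) (hc₁₃ : 0 < c₁₃) (hc₂₄ : 0 < c₂₄)
    (hptolemy : c₁₂ * c₃₄ + c₁₄ * c₂₃ = c₁₃ * c₂₄)
    (hx₁₂ : 0 ≤ x₁₂) (hx₃₄ : 0 ≤ x₃₄) (hx₂₃ : 0 ≤ x₂₃) (hx₁₄ : 0 ≤ x₁₄)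
    (h₁₂ : x₁₂ ≤ c₁₂) (h₂₃ : x₂₃ ≤ c₂₃) (h₃₄ : x₃₄ ≤ c₃₄) (h₁₄ : x₁₄ ≤ c₁₄)
    (h₁₃ : q * c₁₃ ≤ x₁₃) (h₂₄ : q * c₂₄ ≤ x₂₄) :
    (x₁₂ * x₃₄ + x₁₄ * x₂₃) / (x₁₃ * x₂₄) ≤ 1 / q ^ 2 := by
  have hnum : x₁₂ * x₃₄ + x₁₄ * x₂₃ ≤ c₁₃ * c₂₄ :=
    hptolemy ▸ add_le_add (mul_le_mul h₁₂ h₃₄ hx₃₄ (hx₁₂.trans h₁₂))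
      (mul_le_mul h₁₄ h₂₃ hx₂₃ (hx₁₄.trans h₁₄))
  have hden : q * c₁₃ * (q * c₂₄) ≤ x₁₃ * x₂₄ :=
    mul_le_mul h₁₃ h₂₄ (by positivity) ((by positivity : (0 : ℝ) ≤ q * c₁₃).trans h₁₃)
  calc (x₁₂ * x₃₄ + x₁₄ * x₂₃) / (x₁₃ * x₂₄)
      ≤ c₁₃ * c₂₄ / (q * c₁₃ * (q * c₂₄)) := div_le_div₀ (by positivity) hnum (by positivity) hden
    _ = 1 / q ^ 2 := by field_simp

lemma sin_half_sub_pos {θ φ : ℝ} (h : θ < φ) (h' : φ < θ + 2 * π) : 0 < sin ((φ - θ) / 2) :=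
  sin_pos_of_pos_of_lt_pi (by linarith) (by linarith)

lemma ptolemyRatio_ellipsePoint_le {ε θ₁ θ₂ θ₃ θ₄ : ℝ} (hε : ε ^ 2 < 1)
    (h₁₂ : θ₁ < θ₂) (h₂₃ : θ₂ < θ₃) (h₃₄ : θ₃ < θ₄) (h₄₁ : θ₄ < θ₁ + 2 * π) :
    ptolemyRatio (ellipsePoint ε θ₁) (ellipsePoint ε θ₂) (ellipsePoint ε θ₃)
      (ellipsePoint ε θ₄) ≤ 1 / (1 - ε ^ 2) := by
  have hle {θ φ : ℝ} (h : θ < φ) (h' : φ < θ + 2 * π) :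
      ‖ellipsePoint ε θ - ellipsePoint ε φ‖ ≤ 2 * sin ((φ - θ) / 2) := by
    rw [← abs_of_pos (sin_half_sub_pos h h')]
    exact norm_ellipsePoint_sub_le hε.le θ φ
  have hge {θ φ : ℝ} (h : θ < φ) (h' : φ < θ + 2 * π) :
      √(1 - ε ^ 2) * (2 * sin ((φ - θ) / 2)) ≤ ‖ellipsePoint ε θ - ellipsePoint ε φ‖ := by
    rw [← abs_of_pos (sin_half_sub_pos h h')]
    exact sqrt_mul_le_norm_ellipsePoint_sub hε.le θ φ
  rw [ptolemyRatio, ← sq_sqrt (sub_nonneg.2 hε.le)]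
  refine ptolemy_ratio_le_of_chord_bounds (sqrt_pos.2 (sub_pos.2 hε))
    (mul_pos two_pos (sin_half_sub_pos (h₁₂.trans h₂₃) (by linarith)))
    (mul_pos two_pos (sin_half_sub_pos (h₂₃.trans h₃₄) (by linarith)))
    ?_ (norm_nonneg _) (norm_nonneg _) (norm_nonneg _) (norm_nonneg _)
    (hle h₁₂ (by linarith)) (hle h₂₃ (by linarith)) (hle h₃₄ (by linarith))
    (hle (by linarith) h₄₁) (hge (by linarith) (by linarith)) (hge (by linarith) (by linarith))
  have := sin_ptolemy ((θ₂ - θ₁) / 2) ((θ₃ - θ₂) / 2) ((θ₄ - θ₃) / 2)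
  ring_nf at this ⊢
  linear_combination 4 * this

lemma ptolemyRatio_ellipsePoint_quarter_turns {ε : ℝ} (hε : ε ^ 2 ≤ 1) :
    ptolemyRatio (ellipsePoint ε 0) (ellipsePoint ε (π / 2)) (ellipsePoint ε π)
      (ellipsePoint ε (3 * π / 2)) = (2 - ε ^ 2) / (2 * √(1 - ε ^ 2)) := by
  have hnorm (θ φ : ℝ) : ‖ellipsePoint ε θ - ellipsePoint ε φ‖ =
      √((cos θ - cos φ) ^ 2 + (1 - ε ^ 2) * (sin θ - sin φ) ^ 2) := by
    rw [← norm_ellipsePoint_sub_sq hε, sqrt_sq (norm_nonneg _)]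
  have h3 : 3 * π / 2 = π / 2 + π := by ring
  norm_num [ptolemyRatio, hnorm, h3, cos_add_pi, sin_add_pi]
  rw [mul_self_sqrt (by linarith)]
  ring

theorem stmt1 (ε : ℝ) (hε0 : 0 ≤ ε) (hε1 : ε < 1) :
    ellipsePtolemyConst ε ≥
      (1 / 2) * (1 / Real.sqrt (1 - ε ^ 2) + Real.sqrt (1 - ε ^ 2)) ∧
    (1 / 2) * (1 / Real.sqrt (1 - ε ^ 2) + Real.sqrt (1 - ε ^ 2)) =
      (2 - ε ^ 2) / (2 * Real.sqrt (1 - ε ^ 2)) := by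
  have hε : ε ^ 2 < 1 := by nlinarith
  have hb : 0 < √(1 - ε ^ 2) := sqrt_pos.2 (sub_pos.2 hε)
  have heq : (1 / 2) * (1 / √(1 - ε ^ 2) + √(1 - ε ^ 2)) = (2 - ε ^ 2) / (2 * √(1 - ε ^ 2)) := by
    field_simp
    linarith [sq_sqrt (sub_nonneg.2 hε.le)]
  refine ⟨?_, heq⟩
  rw [heq, ← ptolemyRatio_ellipsePoint_quarter_turns hε.le]
  refine le_csSup ⟨1 / (1 - ε ^ 2), ?_⟩ ⟨0, π / 2, π, 3 * π / 2, le_rfl, ?_, ?_, ?_, ?_, rfl⟩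
  · rintro _ ⟨θ₁, θ₂, θ₃, θ₄, h₀, h₁₂, h₂₃, h₃₄, h₄, rfl⟩
    exact ptolemyRatio_ellipsePoint_le hε h₁₂ h₂₃ h₃₄ (by linarith)
  all_goals linarith [pi_pos]
end

section
/- Fix 0 ≤ ε < 1 and set b = √(1 − ε²). The four points v₁ = (0, b), v₂ = (−1, −b), v₃ = (0, −b), v₄ = (1, −b) all lie on the rectangle boundary R_ε = {(x, y) : max(|x|, |y|/b) = 1}, and their Ptolemy ratio equals √(1 + 4(1 − ε²))/(2√(1 − ε²)). -/
open Real

/-- The boundary of the rectangle `[-1,1] × [-√(1-ε²), √(1-ε²)]`: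
the set `max(|x|, |y|/√(1-ε²)) = 1`. -/
def rectBoundary (ε : ℝ) : Set (EuclideanSpace ℝ (Fin 2)) :=
  {v | max |v 0| (|v 1| / Real.sqrt (1 - ε ^ 2)) = 1}

lemma EuclideanSpace.norm_sub_fin_two (a b c d : ℝ) :
    ‖(!₂[a, b] - !₂[c, d] : EuclideanSpace ℝ (Fin 2))‖ = √((a - c) ^ 2 + (b - d) ^ 2) := by
  simp [EuclideanSpace.norm_eq, Fin.sum_univ_two]

lemma mem_rectBoundary_of_abs_le_one {ε x y : ℝ} (hε : ε ^ 2 < 1) (hx : |x| ≤ 1)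
    (hy : |y| = √(1 - ε ^ 2)) : (!₂[x, y] : EuclideanSpace ℝ (Fin 2)) ∈ rectBoundary ε := by
  have hb : 0 < √(1 - ε ^ 2) := Real.sqrt_pos.mpr (by linarith)
  show max |x| (|y| / √(1 - ε ^ 2)) = 1
  rw [hy, div_self hb.ne', max_eq_right hx]

lemma ptolemyRatio_topMidpoint_bottomSide (b : ℝ) (hb : 0 < b) :
    ptolemyRatio !₂[0, b] !₂[-1, -b] !₂[0, -b] !₂[1, -b] = √(1 + 4 * b ^ 2) / (2 * b) := by
  have h₁₂ : ‖(!₂[0, b] - !₂[-1, -b] : EuclideanSpace ℝ (Fin 2))‖ = √(1 + 4 * b ^ 2) := by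
    rw [EuclideanSpace.norm_sub_fin_two]; ring_nf
  have h₁₄ : ‖(!₂[0, b] - !₂[1, -b] : EuclideanSpace ℝ (Fin 2))‖ = √(1 + 4 * b ^ 2) := by
    rw [EuclideanSpace.norm_sub_fin_two]; ring_nf
  have h₁₃ : ‖(!₂[0, b] - !₂[0, -b] : EuclideanSpace ℝ (Fin 2))‖ = 2 * b := by
    rw [EuclideanSpace.norm_sub_fin_two, ← Real.sqrt_sq (by positivity : 0 ≤ 2 * b)]; ring_nf
  have h₃₄ : ‖(!₂[0, -b] - !₂[1, -b] : EuclideanSpace ℝ (Fin 2))‖ = 1 := by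
    rw [EuclideanSpace.norm_sub_fin_two]; norm_num
  have h₂₃ : ‖(!₂[-1, -b] - !₂[0, -b] : EuclideanSpace ℝ (Fin 2))‖ = 1 := by
    rw [EuclideanSpace.norm_sub_fin_two]; norm_num
  have h₂₄ : ‖(!₂[-1, -b] - !₂[1, -b] : EuclideanSpace ℝ (Fin 2))‖ = 2 := by
    rw [EuclideanSpace.norm_sub_fin_two]; norm_num
  rw [ptolemyRatio, h₁₂, h₁₄, h₁₃, h₂₄, h₃₄, h₂₃]
  field_simp
  ring

theorem stmt10 (ε : ℝ) (hε0 : 0 ≤ ε) (hε1 : ε < 1) :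
    (!₂[0, Real.sqrt (1 - ε ^ 2)] : EuclideanSpace ℝ (Fin 2)) ∈ rectBoundary ε ∧
    (!₂[-1, -Real.sqrt (1 - ε ^ 2)] : EuclideanSpace ℝ (Fin 2)) ∈ rectBoundary ε ∧
    (!₂[0, -Real.sqrt (1 - ε ^ 2)] : EuclideanSpace ℝ (Fin 2)) ∈ rectBoundary ε ∧
    (!₂[1, -Real.sqrt (1 - ε ^ 2)] : EuclideanSpace ℝ (Fin 2)) ∈ rectBoundary ε ∧
    ptolemyRatio !₂[0, Real.sqrt (1 - ε ^ 2)] !₂[-1, -Real.sqrt (1 - ε ^ 2)]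
        !₂[0, -Real.sqrt (1 - ε ^ 2)] !₂[1, -Real.sqrt (1 - ε ^ 2)] =
      Real.sqrt (1 + 4 * (1 - ε ^ 2)) / (2 * Real.sqrt (1 - ε ^ 2)) := by
  have hε : ε ^ 2 < 1 := by nlinarith
  have hb : 0 < √(1 - ε ^ 2) := Real.sqrt_pos.mpr (by linarith)
  have habs : |√(1 - ε ^ 2)| = √(1 - ε ^ 2) := abs_of_pos hb
  have habs_neg : |-√(1 - ε ^ 2)| = √(1 - ε ^ 2) := by rw [abs_neg, habs]
  refine ⟨mem_rectBoundary_of_abs_le_one hε (by norm_num) habs,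
    mem_rectBoundary_of_abs_le_one hε (by norm_num) habs_neg,
    mem_rectBoundary_of_abs_le_one hε (by norm_num) habs_neg,
    mem_rectBoundary_of_abs_le_one hε (by norm_num) habs_neg, ?_⟩
  rw [ptolemyRatio_topMidpoint_bottomSide _ hb, Real.sq_sqrt (by linarith)]
end
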